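/- arXiv:math/9812083 — 2 statements merged into one kernel-verified Lean document; each statement's English description precedes it below -/
import Mathlib

section
/- Let z_1, …, z_N be distinct complex numbers, α_k := Π_{l≠k}(z_k - z_l)^{-1}, and e_k(z) := α_k·Π_{j≠k}(z - z_j). Then for i ≠ k: the sum of residues over z_1,…,z_N of the rational function (1/((z - z_i)²))·e_k(z) equals (1/(z_k - z_i))·Π_{s≠i,k} (z_i - z_s)/(z_k - z_s); and for i = k it equals Σ_{s≠k} 1/(z_k - z_s). -/
open RatFunc

/-- The residue of a rational function `f` at a finite point `p`:
the coefficient of `(z-p)^{-1}` in the Laurent expansion of `f` at `p`. -/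
noncomputable def res (p : ℂ) (f : RatFunc ℂ) : ℂ :=
  (((RatFunc.laurent p f : RatFunc ℂ) : LaurentSeries ℂ)).coeff (-1)


section Helpers
open Polynomial HahnSeries

lemma coeff_neg_ofPowerSeries (x : PowerSeries ℂ) {n : ℤ} (hn : n < 0) :
    (HahnSeries.ofPowerSeries ℤ ℂ x).coeff n = 0 := by
  rw [HahnSeries.ofPowerSeries_apply]
  apply HahnSeries.embDomain_notin_range
  rintro ⟨m, hm⟩
  simp at hm
  omega

lemma coe_poly (Q : ℂ[X]) :
    ((algebraMap ℂ[X] (RatFunc ℂ) Q : RatFunc ℂ) : LaurentSeries ℂ)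
      = HahnSeries.ofPowerSeries ℤ ℂ (Q : PowerSeries ℂ) := by
  have := RatFunc.coe_coe (F := ℂ) Q
  rw [show ((Q : RatFunc ℂ)) = algebraMap ℂ[X] (RatFunc ℂ) Q from rfl] at this
  rw [← this]

lemma res_poly (p : ℂ) (Q : ℂ[X]) : res p (algebraMap ℂ[X] (RatFunc ℂ) Q) = 0 := by
  unfold res
  rw [RatFunc.laurent_algebraMap, coe_poly, coeff_neg_ofPowerSeries _ (by norm_num)]

lemma res_add (p : ℂ) (f g : RatFunc ℂ) : res p (f + g) = res p f + res p g := by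
  unfold res; rw [map_add, map_add, HahnSeries.coeff_add]

lemma res_C_mul (p c : ℂ) (f : RatFunc ℂ) : res p (RatFunc.C c * f) = c * res p f := by
  unfold res
  rw [map_mul, RatFunc.laurent_C, map_mul, show ((algebraMap ℂ⟮X⟯ (LaurentSeries ℂ)) (RatFunc.C c))
    = HahnSeries.C c by rw [← RatFunc.algebraMap_C, coe_poly, Polynomial.coe_C, HahnSeries.ofPowerSeries_C],
    HahnSeries.C_mul_eq_smul, HahnSeries.coeff_smul, smul_eq_mul]

lemma ofPowerSeries_inv (u : PowerSeries ℂ) (h : PowerSeries.constantCoeff u ≠ 0) :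
    (HahnSeries.ofPowerSeries ℤ ℂ u)⁻¹ = HahnSeries.ofPowerSeries ℤ ℂ u⁻¹ := by
  apply inv_eq_of_mul_eq_one_right
  rw [← map_mul, PowerSeries.mul_inv_cancel _ h, map_one]

lemma X_sub_C_eq (b : ℂ) :
    (RatFunc.X - RatFunc.C b : RatFunc ℂ) = algebraMap ℂ[X] (RatFunc ℂ) (Polynomial.X - Polynomial.C b) := by
  rw [map_sub, RatFunc.algebraMap_X, RatFunc.algebraMap_C]

lemma constCoeff_X_sub_C (b : ℂ) :
    PowerSeries.constantCoeff ((Polynomial.X - Polynomial.C b : ℂ[X]) : PowerSeries ℂ) = -b := by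
  rw [← PowerSeries.coeff_zero_eq_constantCoeff_apply, Polynomial.coeff_coe]
  simp

lemma coe_X_sub_C_inv_coeff (b : ℂ) :
    (((RatFunc.X - RatFunc.C b)⁻¹ : RatFunc ℂ) : LaurentSeries ℂ).coeff (-1)
      = if b = 0 then 1 else 0 := by
  rw [← one_div, map_div₀, map_one]
  by_cases hb : b = 0
  · subst hb
    rw [if_pos rfl]
    simp only [map_zero, sub_zero, RatFunc.coe_X]
    rw [one_div, HahnSeries.inv_single (1:ℤ) (1:ℂ), inv_one]
    simp
  · rw [if_neg hb, X_sub_C_eq, coe_poly, one_div,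
      ofPowerSeries_inv _ (by rw [constCoeff_X_sub_C]; simpa using hb),
      coeff_neg_ofPowerSeries _ (by norm_num)]

lemma coe_X_sub_C_sq_inv_coeff (b : ℂ) :
    ((((RatFunc.X - RatFunc.C b) ^ 2)⁻¹ : RatFunc ℂ) : LaurentSeries ℂ).coeff (-1) = 0 := by
  rw [← one_div, map_div₀, map_one, map_pow]
  by_cases hb : b = 0
  · subst hb
    simp only [map_zero, sub_zero, RatFunc.coe_X]
    have h2 : ((single (1:ℤ) (1:ℂ)) ^ 2) = single (2:ℤ) (1:ℂ) := by
      rw [sq, HahnSeries.single_mul_single]; norm_num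
    rw [h2, one_div, HahnSeries.inv_single (2:ℤ) (1:ℂ), inv_one]
    rw [HahnSeries.coeff_single_of_ne (by norm_num)]
  · rw [X_sub_C_eq, coe_poly, ← map_pow, one_div,
      ofPowerSeries_inv _ (by rw [map_pow, constCoeff_X_sub_C]; simpa using hb),
      coeff_neg_ofPowerSeries _ (by norm_num)]

lemma res_inv (p a : ℂ) : res p ((RatFunc.X - RatFunc.C a)⁻¹) = if a = p then 1 else 0 := by
  unfold res
  rw [map_inv₀, map_sub, RatFunc.laurent_X, RatFunc.laurent_C]
  have h : (RatFunc.X + RatFunc.C p - RatFunc.C a : RatFunc ℂ)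
      = RatFunc.X - RatFunc.C (a - p) := by rw [map_sub]; ring
  rw [h, coe_X_sub_C_inv_coeff]
  simp [sub_eq_zero]

lemma res_inv_sq (p a : ℂ) : res p (((RatFunc.X - RatFunc.C a) ^ 2)⁻¹) = 0 := by
  unfold res
  rw [map_inv₀, map_pow, map_sub, RatFunc.laurent_X, RatFunc.laurent_C]
  have h : (RatFunc.X + RatFunc.C p - RatFunc.C a : RatFunc ℂ)
      = RatFunc.X - RatFunc.C (a - p) := by rw [map_sub]; ring
  rw [h, coe_X_sub_C_sq_inv_coeff]

lemma prod_X_sub_C_eq {N : ℕ} (z : Fin N → ℂ) (t : Finset (Fin N)) :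
    ∏ j ∈ t, (RatFunc.X - RatFunc.C (z j))
      = algebraMap ℂ[X] (RatFunc ℂ) (∏ j ∈ t, (Polynomial.X - Polynomial.C (z j))) := by
  rw [map_prod]
  exact Finset.prod_congr rfl fun j _ => X_sub_C_eq (z j)

lemma X_sub_C_ne (b : ℂ) : (RatFunc.X - RatFunc.C b : RatFunc ℂ) ≠ 0 := by
  rw [X_sub_C_eq]
  exact RatFunc.algebraMap_ne_zero (Polynomial.X_sub_C_ne_zero b)

theorem part1 {N : ℕ} (z : Fin N → ℂ) (hz : Function.Injective z) (i k : Fin N) (hik : i ≠ k) :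
      ∑ p : Fin N, res (z p)
        (((RatFunc.X - RatFunc.C (z i)) ^ 2)⁻¹ *
          (RatFunc.C (∏ l ∈ Finset.univ.erase k, (z k - z l)⁻¹) *
            ∏ j ∈ Finset.univ.erase k, (RatFunc.X - RatFunc.C (z j))))
        = (z k - z i)⁻¹ *
            ∏ s ∈ (Finset.univ.erase i).erase k, ((z i - z s) * (z k - z s)⁻¹) := by
  set α := ∏ l ∈ Finset.univ.erase k, (z k - z l)⁻¹ with hα
  set t := (Finset.univ.erase k).erase i with ht
  set P : ℂ[X] := ∏ s ∈ t, (Polynomial.X - Polynomial.C (z s)) with hP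
  set c0 := P.eval (z i) with hc0
  obtain ⟨Q, hQ⟩ := Polynomial.X_sub_C_dvd_sub_C_eval (a := z i) (p := P)
  set u : RatFunc ℂ := RatFunc.X - RatFunc.C (z i) with hu
  have hu0 : u ≠ 0 := X_sub_C_ne _
  have hi : i ∈ Finset.univ.erase k := Finset.mem_erase.2 ⟨hik, Finset.mem_univ i⟩
  -- rewrite the big function
  have key : (((RatFunc.X - RatFunc.C (z i)) ^ 2)⁻¹ *
          (RatFunc.C α * ∏ j ∈ Finset.univ.erase k, (RatFunc.X - RatFunc.C (z j))))
      = RatFunc.C α * (RatFunc.C c0 * u⁻¹ + algebraMap ℂ[X] (RatFunc ℂ) Q) := by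
    rw [← Finset.mul_prod_erase _ _ hi, ← ht, prod_X_sub_C_eq, ← hP]
    have hPQ : algebraMap ℂ[X] (RatFunc ℂ) P = RatFunc.C c0 + u * algebraMap ℂ[X] (RatFunc ℂ) Q := by
      have : P = Polynomial.C c0 + (Polynomial.X - Polynomial.C (z i)) * Q := by
        linear_combination hQ
      rw [this, map_add, map_mul, ← X_sub_C_eq, RatFunc.algebraMap_C]
    rw [hPQ]
    simp only [← hu]
    field_simp
  simp only [← hu] at key
  simp_rw [key]
  have hres : ∀ p, res (z p) (RatFunc.C α * (RatFunc.C c0 * u⁻¹ + algebraMap ℂ[X] (RatFunc ℂ) Q))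
      = α * (c0 * (if z i = z p then 1 else 0)) := by
    intro p
    rw [res_C_mul, res_add, res_C_mul, res_poly, res_inv, add_zero]
  simp_rw [hres]
  have hiff : ∀ p : Fin N, (z i = z p) ↔ (i = p) := fun p => hz.eq_iff
  simp_rw [hiff]
  have hsum : ∑ x : Fin N, α * (c0 * if i = x then 1 else 0) = α * c0 := by
    simp
  rw [hsum]
  have hc0' : c0 = ∏ s ∈ t, (z i - z s) := by
    simp [hc0, hP, Polynomial.eval_prod]
  have herase : (Finset.univ.erase i).erase k = t := Finset.erase_right_comm
  rw [herase, hα, ← Finset.mul_prod_erase _ _ hi, ← ht, hc0', Finset.prod_mul_distrib]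
  ring

lemma deriv_eval_prod {ι : Type*} [DecidableEq ι] (t : Finset ι) (z : ι → ℂ) (w : ℂ) :
    ((∏ s ∈ t, (Polynomial.X - Polynomial.C (z s))).derivative).eval w
      = ∑ s ∈ t, ∏ j ∈ t.erase s, (w - z j) := by
  induction t using Finset.induction with
  | empty => simp
  | @insert a t ha ih =>
    rw [Finset.prod_insert ha, Polynomial.derivative_mul, Polynomial.derivative_X_sub_C,
      one_mul, Polynomial.eval_add, Polynomial.eval_mul, ih, Finset.sum_insert ha,
      Finset.erase_insert ha]
    simp only [Polynomial.eval_sub, Polynomial.eval_X, Polynomial.eval_C, Polynomial.eval_prod]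
    rw [Finset.mul_sum]
    congr 1
    apply Finset.sum_congr rfl
    intro s hs
    rw [Finset.erase_insert_of_ne (ne_of_mem_of_not_mem hs ha).symm,
      Finset.prod_insert (fun h => ha (Finset.mem_of_mem_erase h))]

theorem part2 {N : ℕ} (z : Fin N → ℂ) (hz : Function.Injective z) (k : Fin N) :
      ∑ p : Fin N, res (z p)
        (((RatFunc.X - RatFunc.C (z k)) ^ 2)⁻¹ *
          (RatFunc.C (∏ l ∈ Finset.univ.erase k, (z k - z l)⁻¹) *
            ∏ j ∈ Finset.univ.erase k, (RatFunc.X - RatFunc.C (z j))))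
        = ∑ s ∈ Finset.univ.erase k, (z k - z s)⁻¹ := by
  set α := ∏ l ∈ Finset.univ.erase k, (z k - z l)⁻¹ with hα
  set P : ℂ[X] := ∏ s ∈ Finset.univ.erase k, (Polynomial.X - Polynomial.C (z s)) with hP
  set c0 := P.eval (z k) with hc0
  set c1 := P.derivative.eval (z k) with hc1
  -- double Taylor expansion of P at z k
  set R : ℂ[X] := P - Polynomial.C c0 - Polynomial.C c1 * (Polynomial.X - Polynomial.C (z k))
    with hR
  have hR0 : R.eval (z k) = 0 := by simp [hR, hc0]
  obtain ⟨R1, hR1⟩ := (Polynomial.dvd_iff_isRoot).2 hR0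
  have hR1root : R1.eval (z k) = 0 := by
    have hd : R.derivative = P.derivative - Polynomial.C c1 := by
      simp [hR]
    have hd2 : R.derivative.eval (z k) = R1.eval (z k) := by
      rw [hR1, Polynomial.derivative_mul]
      simp
    rw [hd] at hd2
    simp only [Polynomial.eval_sub, Polynomial.eval_C, hc1] at hd2
    rw [sub_self] at hd2
    exact hd2.symm
  obtain ⟨Q, hQ⟩ := (Polynomial.dvd_iff_isRoot).2 hR1root
  have hPexp : P = Polynomial.C c0 + Polynomial.C c1 * (Polynomial.X - Polynomial.C (z k))
      + (Polynomial.X - Polynomial.C (z k)) ^ 2 * Q := by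
    linear_combination hR1 + (Polynomial.X - Polynomial.C (z k)) * hQ
  set u : RatFunc ℂ := RatFunc.X - RatFunc.C (z k) with hu
  have hu0 : u ≠ 0 := X_sub_C_ne _
  have key : (((RatFunc.X - RatFunc.C (z k)) ^ 2)⁻¹ *
          (RatFunc.C α * ∏ j ∈ Finset.univ.erase k, (RatFunc.X - RatFunc.C (z j))))
      = RatFunc.C α * (RatFunc.C c0 * (u ^ 2)⁻¹ + (RatFunc.C c1 * u⁻¹
          + algebraMap ℂ[X] (RatFunc ℂ) Q)) := by
    rw [prod_X_sub_C_eq, ← hP]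
    have hPQ : algebraMap ℂ[X] (RatFunc ℂ) P = RatFunc.C c0 + RatFunc.C c1 * u
        + u ^ 2 * algebraMap ℂ[X] (RatFunc ℂ) Q := by
      rw [hPexp, map_add, map_add, map_mul, map_mul, map_pow, ← X_sub_C_eq,
        RatFunc.algebraMap_C, RatFunc.algebraMap_C, ← hu]
    rw [hPQ]
    simp only [← hu]
    field_simp
    ring
  simp only [← hu] at key
  simp_rw [key]
  have hres : ∀ p, res (z p) (RatFunc.C α * (RatFunc.C c0 * (u ^ 2)⁻¹ + (RatFunc.C c1 * u⁻¹
          + algebraMap ℂ[X] (RatFunc ℂ) Q)))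
      = α * (c1 * (if z k = z p then 1 else 0)) := by
    intro p
    rw [res_C_mul, res_add, res_add, res_C_mul, res_C_mul, res_poly, res_inv, res_inv_sq]
    ring
  simp_rw [hres]
  have hiff : ∀ p : Fin N, (z k = z p) ↔ (k = p) := fun p => hz.eq_iff
  simp_rw [hiff]
  have hsum : ∑ x : Fin N, α * (c1 * if k = x then 1 else 0) = α * c1 := by simp
  rw [hsum]
  -- now the scalar identity α * c1 = ∑ s ≠ k, (z k - z s)⁻¹
  have hc1' : c1 = ∑ s ∈ Finset.univ.erase k,
      ∏ j ∈ (Finset.univ.erase k).erase s, (z k - z j) := by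
    rw [hc1, hP, deriv_eval_prod]
  rw [hc1', Finset.mul_sum]
  apply Finset.sum_congr rfl
  intro s hs
  have hks : ∀ l ∈ Finset.univ.erase k, z k - z l ≠ 0 := by
    intro l hl
    have : l ≠ k := (Finset.mem_erase.1 hl).1
    exact sub_ne_zero.2 fun h => this (hz h).symm
  rw [hα, ← Finset.mul_prod_erase _ _ hs, mul_assoc, ← Finset.prod_mul_distrib]
  rw [Finset.prod_congr rfl (fun l hl => inv_mul_cancel₀
    (hks l (Finset.mem_of_mem_erase hl)))]
  simp

end Helpers

/-- The pairing `⟨Ω̃^i, e_k⟩`: for distinct `z_1,…,z_N`,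
`α_k = Π_{l≠k}(z_k - z_l)⁻¹` and `e_k(z) = α_k·Π_{j≠k}(z - z_j)`, the sum of
residues of `(z - z_i)⁻²·e_k(z)` over `z_1,…,z_N` equals
`(1/(z_k - z_i))·Π_{s≠i,k}(z_i - z_s)/(z_k - z_s)` when `i ≠ k`, and
`Σ_{s≠k} 1/(z_k - z_s)` when `i = k`. -/
theorem stmt9 {N : ℕ} (z : Fin N → ℂ) (hz : Function.Injective z) (i k : Fin N) :
    (i ≠ k →
      ∑ p : Fin N, res (z p)
        (((RatFunc.X - RatFunc.C (z i)) ^ 2)⁻¹ *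
          (RatFunc.C (∏ l ∈ Finset.univ.erase k, (z k - z l)⁻¹) *
            ∏ j ∈ Finset.univ.erase k, (RatFunc.X - RatFunc.C (z j))))
        = (z k - z i)⁻¹ *
            ∏ s ∈ (Finset.univ.erase i).erase k, ((z i - z s) * (z k - z s)⁻¹)) ∧
    (i = k →
      ∑ p : Fin N, res (z p)
        (((RatFunc.X - RatFunc.C (z i)) ^ 2)⁻¹ *
          (RatFunc.C (∏ l ∈ Finset.univ.erase k, (z k - z l)⁻¹) *
            ∏ j ∈ Finset.univ.erase k, (RatFunc.X - RatFunc.C (z j))))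
        = ∑ s ∈ Finset.univ.erase k, (z k - z s)⁻¹) := by
  constructor
  · intro hik
    exact part1 z hz i k hik
  · intro hik
    subst hik
    exact part2 z hz i
end

section
/- Let z_1, …, z_N be distinct complex numbers, α_i := Π_{l≠i}(z_i - z_l)^{-1}, and ω^{(m,i)}(z) := α_i^{-m}/((z - z_i)·Π_{s=1}^{N}(z - z_s)^m), e_k(z) := α_k·Π_{j≠k}(z - z_j). If m + n ≤ -2, or if m + n = -1 and it is not the case that i = j = k, then the rational function ω^{(m,i)}(z)·ω^{(n,j)}(z)·e_k(z) has no pole at any of z_1, …, z_N (so all its residues at these points vanish), and hence the coefficient l_k^{(m,i)(n,j)} := Σ_{p=1}^N res_{z_p}(ω^{(m,i)}ω^{(n,j)}e_k) = 0. -/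
open RatFunc
/-- The order of a rational function at a finite point `a` (negative for a
pole), via the coprime num/denom representation. -/
noncomputable def ordAt (a : ℂ) (f : RatFunc ℂ) : ℤ :=
  (f.num.rootMultiplicity a : ℤ) - (f.denom.rootMultiplicity a : ℤ)

/-- The genus-zero KN one-form coefficient function
`ω^{(m,i)}(z) = α_i^{-m}/((z - z_i)·Π_{s=1}^N (z - z_s)^m)`,
where `α_i = Π_{l≠i}(z_i - z_l)⁻¹`. -/
noncomputable def om {N : ℕ} (z : Fin N → ℂ) (m : ℤ) (i : Fin N) : RatFunc ℂ :=
  RatFunc.C ((∏ l ∈ Finset.univ.erase i, (z i - z l)⁻¹) ^ (-m)) *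
    ((RatFunc.X - RatFunc.C (z i)) *
      (∏ s : Fin N, (RatFunc.X - RatFunc.C (z s))) ^ m)⁻¹

/-- The degree-(-1) KN vector field coefficient function
`e_k(z) = α_k·Π_{j≠k}(z - z_j)`. -/
noncomputable def ev {N : ℕ} (z : Fin N → ℂ) (k : Fin N) : RatFunc ℂ :=
  RatFunc.C (∏ l ∈ Finset.univ.erase k, (z k - z l)⁻¹) *
    ∏ j ∈ Finset.univ.erase k, (RatFunc.X - RatFunc.C (z j))

open Polynomial Finset

lemma res_algebraMap (p : ℂ) (q : ℂ[X]) : res p (algebraMap ℂ[X] (RatFunc ℂ) q) = 0 := by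
  unfold res
  rw [RatFunc.laurent_algebraMap]
  rw [show (algebraMap ℂ[X] (RatFunc ℂ)) ((Polynomial.taylor p) q)
      = ((Polynomial.taylor p q : ℂ[X]) : RatFunc ℂ) from rfl, ← RatFunc.coe_coe]
  rw [PowerSeries.coeff_coe]
  simp

lemma ordAt_algebraMap (a : ℂ) (q : ℂ[X]) : 0 ≤ ordAt a (algebraMap ℂ[X] (RatFunc ℂ) q) := by
  unfold ordAt
  rw [RatFunc.num_algebraMap, RatFunc.denom_algebraMap]
  simp [Polynomial.rootMultiplicity_eq_zero]

lemma amap_prod {N : ℕ} (z : Fin N → ℂ) (t : Finset (Fin N)) :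
    algebraMap ℂ[X] (RatFunc ℂ) (∏ l ∈ t, (Polynomial.X - Polynomial.C (z l)))
      = ∏ l ∈ t, (RatFunc.X - RatFunc.C (z l)) := by
  rw [map_prod]
  simp [map_sub, RatFunc.algebraMap_X, RatFunc.algebraMap_C]

lemma om_eq {N : ℕ} (z : Fin N → ℂ) (m : ℤ) (i : Fin N) :
    om z m i = RatFunc.C ((∏ l ∈ Finset.univ.erase i, (z i - z l)⁻¹) ^ (-m)) *
      ((RatFunc.X - RatFunc.C (z i))⁻¹ *
        (algebraMap ℂ[X] (RatFunc ℂ)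
          (∏ s : Fin N, (Polynomial.X - Polynomial.C (z s)))) ^ (-m)) := by
  rw [om, amap_prod, mul_inv, ← zpow_neg]

lemma ev_eq {N : ℕ} (z : Fin N → ℂ) (k : Fin N) :
    ev z k = RatFunc.C (∏ l ∈ Finset.univ.erase k, (z k - z l)⁻¹) *
      algebraMap ℂ[X] (RatFunc ℂ)
        (∏ l ∈ Finset.univ.erase k, (Polynomial.X - Polynomial.C (z l))) := by
  rw [ev, amap_prod]

lemma key {N : ℕ} (z : Fin N → ℂ) (m n : ℤ) (i j k : Fin N)
    (h : m + n ≤ -2 ∨ (m + n = -1 ∧ ¬(i = j ∧ j = k))) :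
    ∃ q : Polynomial ℂ, om z m i * om z n j * ev z k = algebraMap ℂ[X] (RatFunc ℂ) q := by
  have hXne : ∀ p : Fin N, (RatFunc.X - RatFunc.C (z p)) ≠ 0 := by
    intro p
    rw [show RatFunc.X - RatFunc.C (z p)
        = algebraMap ℂ[X] (RatFunc ℂ) (Polynomial.X - Polynomial.C (z p)) by
      simp [map_sub, RatFunc.algebraMap_X, RatFunc.algebraMap_C]]
    exact RatFunc.algebraMap_ne_zero (Polynomial.X_sub_C_ne_zero _)
  set A := algebraMap ℂ[X] (RatFunc ℂ) with hA
  set P : ℂ[X] := ∏ s : Fin N, (Polynomial.X - Polynomial.C (z s)) with hP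
  set Q : Fin N → ℂ[X] :=
    fun p => ∏ l ∈ Finset.univ.erase p, (Polynomial.X - Polynomial.C (z l)) with hQ
  have hPne : P ≠ 0 := by
    rw [hP]
    exact Finset.prod_ne_zero_iff.mpr fun s _ => Polynomial.X_sub_C_ne_zero _
  have hAPne : A P ≠ 0 := RatFunc.algebraMap_ne_zero hPne
  have hfacP : ∀ p : Fin N, P = (Polynomial.X - Polynomial.C (z p)) * Q p := fun p =>
    (Finset.mul_prod_erase Finset.univ _ (Finset.mem_univ p)).symm
  have lhs_eq : om z m i * om z n j * ev z k
      = (RatFunc.C ((∏ l ∈ Finset.univ.erase i, (z i - z l)⁻¹) ^ (-m)) *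
         RatFunc.C ((∏ l ∈ Finset.univ.erase j, (z j - z l)⁻¹) ^ (-n)) *
         RatFunc.C (∏ l ∈ Finset.univ.erase k, (z k - z l)⁻¹)) *
        (((A P) ^ (-m) * (A P) ^ (-n)) * A (Q k)) *
        ((RatFunc.X - RatFunc.C (z i))⁻¹ * (RatFunc.X - RatFunc.C (z j))⁻¹) := by
    rw [om_eq, om_eq, ev_eq]
    ring
  rcases h with h1 | ⟨h2, hijk⟩
  · -- m + n ≤ -2
    obtain ⟨t, ht⟩ : ∃ t : ℕ, -m + -n = ((t + 2 : ℕ) : ℤ) :=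
      ⟨(-(m + n) - 2).toNat, by push_cast; omega⟩
    have e1 : (A P) ^ (-m) * (A P) ^ (-n)
        = A (P ^ t * ((Polynomial.X - Polynomial.C (z i)) * Q i) *
            ((Polynomial.X - Polynomial.C (z j)) * Q j)) := by
      rw [← zpow_add₀ hAPne, ht, zpow_natCast, ← map_pow]
      congr 1
      rw [← hfacP i, ← hfacP j]
      ring
    refine ⟨Polynomial.C ((∏ l ∈ Finset.univ.erase i, (z i - z l)⁻¹) ^ (-m) *
        (∏ l ∈ Finset.univ.erase j, (z j - z l)⁻¹) ^ (-n) *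
        ∏ l ∈ Finset.univ.erase k, (z k - z l)⁻¹) * (P ^ t * (Q i * (Q j * Q k))), ?_⟩
    rw [lhs_eq, e1]
    rw [hA]
    simp only [map_mul, map_pow, map_sub, RatFunc.algebraMap_X, RatFunc.algebraMap_C]
    generalize RatFunc.C ((∏ l ∈ Finset.univ.erase i, (z i - z l)⁻¹) ^ (-m)) = c1
    generalize RatFunc.C ((∏ l ∈ Finset.univ.erase j, (z j - z l)⁻¹) ^ (-n)) = c2
    generalize RatFunc.C (∏ l ∈ Finset.univ.erase k, (z k - z l)⁻¹) = c3
    field_simp [hXne i, hXne j]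
  · -- m + n = -1
    have e1 : (A P) ^ (-m) * (A P) ^ (-n) = A P := by
      rw [← zpow_add₀ hAPne, show -m + -n = (1 : ℤ) by omega, zpow_one]
    have hcase : i ≠ j ∨ j ≠ k := by tauto
    rcases hcase with hij | hjk
    · have hPij : P = (Polynomial.X - Polynomial.C (z i)) *
          ((Polynomial.X - Polynomial.C (z j)) *
            ∏ l ∈ (Finset.univ.erase i).erase j, (Polynomial.X - Polynomial.C (z l))) := by
        rw [hfacP i]
        congr 1
        exact (Finset.mul_prod_erase _ _
          (Finset.mem_erase.mpr ⟨hij.symm, Finset.mem_univ j⟩)).symm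
      refine ⟨Polynomial.C ((∏ l ∈ Finset.univ.erase i, (z i - z l)⁻¹) ^ (-m) *
          (∏ l ∈ Finset.univ.erase j, (z j - z l)⁻¹) ^ (-n) *
          ∏ l ∈ Finset.univ.erase k, (z k - z l)⁻¹) *
        ((∏ l ∈ (Finset.univ.erase i).erase j, (Polynomial.X - Polynomial.C (z l))) * Q k), ?_⟩
      rw [lhs_eq, e1, hPij]
      rw [hA]
      simp only [map_mul, map_pow, map_sub, RatFunc.algebraMap_X, RatFunc.algebraMap_C]
      generalize RatFunc.C ((∏ l ∈ Finset.univ.erase i, (z i - z l)⁻¹) ^ (-m)) = c1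
      generalize RatFunc.C ((∏ l ∈ Finset.univ.erase j, (z j - z l)⁻¹) ^ (-n)) = c2
      generalize RatFunc.C (∏ l ∈ Finset.univ.erase k, (z k - z l)⁻¹) = c3
      field_simp [hXne i, hXne j]
    · have hQk : Q k = (Polynomial.X - Polynomial.C (z j)) *
          ∏ l ∈ (Finset.univ.erase k).erase j, (Polynomial.X - Polynomial.C (z l)) :=
        (Finset.mul_prod_erase _ _
          (Finset.mem_erase.mpr ⟨hjk, Finset.mem_univ j⟩)).symm
      refine ⟨Polynomial.C ((∏ l ∈ Finset.univ.erase i, (z i - z l)⁻¹) ^ (-m) *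
          (∏ l ∈ Finset.univ.erase j, (z j - z l)⁻¹) ^ (-n) *
          ∏ l ∈ Finset.univ.erase k, (z k - z l)⁻¹) *
        (Q i * ∏ l ∈ (Finset.univ.erase k).erase j, (Polynomial.X - Polynomial.C (z l))), ?_⟩
      rw [lhs_eq, e1, hfacP i, hQk]
      rw [hA]
      simp only [map_mul, map_pow, map_sub, RatFunc.algebraMap_X, RatFunc.algebraMap_C]
      generalize RatFunc.C ((∏ l ∈ Finset.univ.erase i, (z i - z l)⁻¹) ^ (-m)) = c1
      generalize RatFunc.C ((∏ l ∈ Finset.univ.erase j, (z j - z l)⁻¹) ^ (-n)) = c2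
      generalize RatFunc.C (∏ l ∈ Finset.univ.erase k, (z k - z l)⁻¹) = c3
      field_simp [hXne i, hXne j]

/-- If `m + n ≤ -2`, or `m + n = -1` and not `i = j = k`, then
`ω^{(m,i)}·ω^{(n,j)}·e_k` has no pole at any of `z_1,…,z_N`, so all its
residues there vanish and the structure coefficient
`l_k^{(m,i)(n,j)} = Σ_p res_{z_p}(ω^{(m,i)}ω^{(n,j)}e_k)` is zero. -/
theorem stmt17 {N : ℕ} (z : Fin N → ℂ) (hz : Function.Injective z)
    (m n : ℤ) (i j k : Fin N)
    (h : m + n ≤ -2 ∨ (m + n = -1 ∧ ¬(i = j ∧ j = k))) :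
    (∀ p : Fin N, 0 ≤ ordAt (z p) (om z m i * om z n j * ev z k)) ∧
    (∀ p : Fin N, res (z p) (om z m i * om z n j * ev z k) = 0) ∧
    ∑ p : Fin N, res (z p) (om z m i * om z n j * ev z k) = 0 := by
  obtain ⟨q, hq⟩ := key z m n i j k h
  rw [hq]
  exact ⟨fun p => ordAt_algebraMap (z p) q, fun p => res_algebraMap (z p) q,
    Finset.sum_eq_zero fun p _ => res_algebraMap (z p) q⟩
end
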